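/- Let a ≥ b ≥ 2, n = a+b+1, I ∈ W_> with q − p ≥ 1, and let H_r = \overline{L_r} R_r for 1 ≤ r ≤ q−p. If D_{H_r} < 0, then either r = q − p, or |R_I| = a (i.e. I ∈ A) and r = 1. -/

import Mathlib

open scoped Classical
open MvPolynomial Finset

noncomputable section

/-- `σ⁺_I(a)`: the minimal partial sum of `I` that is at least `a`. -/
def sigmaP (I : List ℕ) (a : ℝ) : ℝ :=
  sInf {x : ℝ | ∃ k ≤ I.length, x = ((I.take k).sum : ℝ) ∧ a ≤ x}

/-- `Θ⁺_I(a) = σ⁺_I(a) − a`. -/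
def thetaP (I : List ℕ) (a : ℝ) : ℝ := sigmaP I a - a

/-- `σ⁻_I(a)`: the maximal partial sum of `I` that is at most `a`. -/
def sigmaM (I : List ℕ) (a : ℝ) : ℝ :=
  sSup {x : ℝ | ∃ k ≤ I.length, x = ((I.take k).sum : ℝ) ∧ x ≤ a}

/-- `Θ⁻_I(a) = a − σ⁻_I(a)`. -/
def thetaM (I : List ℕ) (a : ℝ) : ℝ := a - sigmaM I a

/-- `w_I = i₁(i₂−1)⋯(i_z−1)`. -/
def wI : List ℕ → ℕ
  | [] => 1
  | i :: t => i * (t.map (· - 1)).prod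

/-- `e_I`: the product of elementary symmetric polynomials indexed by the parts of `I`,
in `N` variables. -/
def eComp (N : ℕ) (I : List ℕ) : MvPolynomial (Fin N) ℝ :=
  (I.map fun i => MvPolynomial.esymm (Fin N) ℝ i).prod

/-- The chromatic symmetric function of a graph, truncated to `N` variables. -/
def csf {V : Type} [Fintype V] (G : SimpleGraph V) (N : ℕ) : MvPolynomial (Fin N) ℝ :=
  ∑ κ : V → Fin N,
    if ∀ u v, G.Adj u v → κ u ≠ κ v then ∏ v, MvPolynomial.X (κ v) else 0

/-- Add a single edge `uv` to a graph. -/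
def addE {V : Type} (G : SimpleGraph V) (u v : V) : SimpleGraph V :=
  G ⊔ SimpleGraph.fromRel fun x y => x = u ∧ y = v

/-- The list of consecutive pairs of a list of vertices. -/
def chainE (l : List ℕ) : List (ℕ × ℕ) := l.zip l.tail

/-- The simple graph on `Fin n` with the given list of edges. -/
def graphOfEdges (n : ℕ) (E : List (ℕ × ℕ)) : SimpleGraph (Fin n) :=
  SimpleGraph.fromRel fun u v => ((u : ℕ), (v : ℕ)) ∈ E

/-- The path on `n` vertices. -/
def pathG (n : ℕ) : SimpleGraph (Fin n) := graphOfEdges n (chainE (List.range n))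

/-- The cycle on `n` vertices. -/
def cycleG (n : ℕ) : SimpleGraph (Fin n) :=
  graphOfEdges n (chainE (List.range n ++ [0]))

/-- The tadpole `C_a^l`: a cycle on `a` vertices with a path of `l` edges attached. -/
def tadpoleG (a l : ℕ) : SimpleGraph (Fin (a + l)) :=
  graphOfEdges (a + l)
    (chainE (List.range a ++ [0]) ++ chainE (0 :: (List.range l).map (· + a)))

/-- The theta graph `θ_{abc}`: two vertices (`0` and `a+b+c-2`) joined by three internally
disjoint paths of lengths `a`, `b`, `c`. -/
def thetaG (a b c : ℕ) : SimpleGraph (Fin (a + b + c - 1)) :=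
  graphOfEdges (a + b + c - 1)
    (chainE (0 :: ((List.range (a - 1)).map (· + 1) ++ [a + b + c - 2])) ++
     chainE (0 :: ((List.range (b - 1)).map (· + a) ++ [a + b + c - 2])) ++
     chainE (0 :: ((List.range (c - 1)).map (· + (a + b - 1)) ++ [a + b + c - 2])))

/-- The index `p` defined by `m = i₁ + ⋯ + i_{p-1} + s` with `1 ≤ s ≤ i_p`:
the least `k` with `i₁ + ⋯ + i_k ≥ m`. -/
def pIdx (I : List ℕ) (m : ℕ) : ℕ := sInf {k | m ≤ (I.take k).sum}

/-- The number `s` defined by `m = i₁ + ⋯ + i_{p-1} + s` with `1 ≤ s ≤ i_p`. -/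
def sVal (I : List ℕ) (m : ℕ) : ℕ := m - (I.take (pIdx I m - 1)).sum

/-- The index `q` defined by `m = i₂ + ⋯ + i_q + t` with `1 ≤ t ≤ i_{q+1}`
(convention `i_{z+1} = i₁`). -/
def qIdx (I : List ℕ) (m : ℕ) : ℕ := sInf {k | m ≤ ((I.tail ++ I.take 1).take k).sum}

/-- The number `t` defined by `m = i₂ + ⋯ + i_q + t` with `1 ≤ t ≤ i_{q+1}`. -/
def tVal (I : List ℕ) (m : ℕ) : ℕ := m - ((I.tail ++ I.take 1).take (qIdx I m - 1)).sum

/-- The part `i_p`. -/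
def ipPart (I : List ℕ) (m : ℕ) : ℕ := I.getD (pIdx I m - 1) 0

/-- The second elementary symmetric polynomial evaluated on a list. -/
def e2 : List ℕ → ℤ
  | [] => 0
  | x :: t => (x : ℤ) * t.sum + e2 t

/-- The cycle-chord coefficient `Δ_I(m)`. -/
def DeltaI (I : List ℕ) (m : ℕ) : ℤ :=
  if (I.headI : ℤ) ≤ (ipPart I m : ℤ) - sVal I m then
    (sVal I m : ℤ) * ((ipPart I m : ℤ) - sVal I m - I.headI)
  else
    e2 ((ipPart I m - sVal I m) ::
        ((I.drop (pIdx I m)).take (qIdx I m - pIdx I m) ++ [tVal I m]))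

/-- The length of the prefix `P` in the decomposition `I = PQ`, where `Q` is the shortest
suffix of `I` with `|Q| ≥ a`. -/
def kPhi (a : ℕ) (I : List ℕ) : ℕ := sSup {j | j ≤ I.length ∧ a ≤ (I.drop j).sum}

/-- The transformation `φ`: writing `I = PQ` with `Q` the shortest suffix of modulus `≥ a`,
`φ(I) = I` if `Q = I`, and otherwise `φ(I) = i₁ · reverse(P∖i₁) · Q`. -/
def phi (a : ℕ) (I : List ℕ) : List ℕ :=
  if kPhi a I = 0 then I
  else I.take 1 ++ ((I.drop 1).take (kPhi a I - 1)).reverse ++ I.drop (kPhi a I)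

/-- The starting position of the longest suffix `R_I` of `I` of modulus `≤ a`. -/
def rIdx (a : ℕ) (I : List ℕ) : ℕ := sInf {j | (I.drop j).sum ≤ a}

/-- The partial reversal `ψ(I) = reverse(L_I) R_I`, where `R_I` is the longest suffix of `I`
of modulus `≤ a` and `L_I` is the complementary prefix. -/
def psi (a : ℕ) (I : List ℕ) : List ℕ :=
  (I.take (rIdx a I)).reverse ++ I.drop (rIdx a I)

/-- The clock coefficient `D_I = Θ⁺_I(2) − Θ⁻_{reverse(φ(I))}(a) + Δ_I(b+1)`. -/
def DI (a b : ℕ) (I : List ℕ) : ℝ :=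
  thetaP I 2 - thetaM (phi a I).reverse a + (DeltaI I (b + 1) : ℝ)

end

/-!
Put `P = p + r`, so that `H = H_r = i_P ⋯ i_1 i_{P+1} ⋯ i_z`, and let `x = i_P`,
`u = i_2 + ⋯ + i_P` and `S = i_1 + ⋯ + i_P`. As long as `u < b + 1 ≤ S - x`, all the
parameters of `H` are read off from `x`, `u`, `S`: `p_H = P`, `q_H = P - 1`, the part at `p_H`
is `i_1`, `Θ⁺_H(2) = x - 2`, and `φ(H)` keeps the suffix after position `P - 1`, so that
`Θ⁻_{φ(H)‾}(a) = S - (b + 1)`. In fact `u ≤ b - 2` because `P < q`, and `S - x ≥ b + 2`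
because `P > p`, except when `r = 1` and `i_{p+1} + ⋯ + i_z = a`. With these bounds both
branches of `Δ_H(b + 1)` make `D_H` nonnegative.
-/

namespace List

theorem sum_take_add_le_sum_take {l : List ℕ} {c j k : ℕ} (hc : ∀ x ∈ l, c ≤ x)
    (hjk : j < k) (hj : j < l.length) : (l.take j).sum + c ≤ (l.take k).sum :=
  calc (l.take j).sum + c ≤ (l.take j).sum + l[j] :=
        Nat.add_le_add_left (hc _ (getElem_mem hj)) _
    _ = (l.take (j + 1)).sum := (sum_take_succ l j hj).symm
    _ ≤ (l.take k).sum := l.monotone_sum_take hjk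

theorem sum_drop_le_sum_drop {l : List ℕ} {j k : ℕ} (h : j ≤ k) :
    (l.drop k).sum ≤ (l.drop j).sum := by
  have : (l.take j).sum ≤ (l.take k).sum := l.monotone_sum_take h
  have := l.sum_take_add_sum_drop j
  have := l.sum_take_add_sum_drop k
  omega

theorem sum_take_one (l : List ℕ) : (l.take 1).sum = l.headI := by
  cases l <;> simp

theorem tail_append_take_one {α : Type*} (l : List α) :
    l.tail ++ l.take 1 = l.rotate 1 := by
  cases l <;> simp

theorem sum_take_rotate_one_add {l : List ℕ} {k : ℕ} (hk : k < l.length) :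
    ((l.rotate 1).take k).sum + l.headI = (l.take (k + 1)).sum := by
  rw [rotate_eq_drop_append_take (by omega), take_append_of_le_length (by simp; omega),
    add_comm k, take_add, sum_append, sum_take_one, drop_one, add_comm]

theorem sum_take_reverse_take_append {l : List ℕ} {k P : ℕ} (hk : k ≤ P)
    (hP : P ≤ l.length) :
    (((l.take P).reverse ++ l.drop P).take k).sum + (l.take (P - k)).sum = (l.take P).sum := by
  rw [take_append_of_le_length (by simp; omega), take_reverse, sum_reverse, length_take,
    min_eq_left hP, add_comm, ← (l.take P).sum_take_add_sum_drop (P - k), take_take,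
    min_eq_left (by omega : P - k ≤ P)]

end List

open List

section FirstCrossing

variable {l : List ℕ} {m K : ℕ}

theorem pIdx_eq (hlt : (l.take (K - 1)).sum < m) (hle : m ≤ (l.take K).sum) : pIdx l m = K :=
  le_antisymm (Nat.sInf_le hle) <| le_csInf ⟨K, hle⟩ fun k hk => by
    by_contra! hkK
    exact (hk.trans (l.monotone_sum_take (show k ≤ K - 1 by omega))).not_gt hlt

theorem le_sum_take_pIdx (h : m ≤ l.sum) : m ≤ (l.take (pIdx l m)).sum :=
  Nat.sInf_mem (s := {k | m ≤ (l.take k).sum}) ⟨l.length, by simpa using h⟩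

theorem sum_take_lt_of_lt_pIdx {k : ℕ} (hk : k < pIdx l m) : (l.take k).sum < m :=
  not_le.1 (Nat.notMem_of_lt_sInf (s := {k | m ≤ (l.take k).sum}) hk)

theorem pIdx_le_length (h : m ≤ l.sum) : pIdx l m ≤ l.length :=
  Nat.sInf_le (by simpa using h)

theorem pIdx_pos (hm : 0 < m) (h : m ≤ l.sum) : 0 < pIdx l m := by
  have := le_sum_take_pIdx h
  by_contra! h0
  simp_all

theorem qIdx_eq_pIdx_rotate : qIdx l m = pIdx (l.rotate 1) m := by
  rw [qIdx, pIdx, tail_append_take_one]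

theorem qIdx_le_length (h : m ≤ l.sum) : qIdx l m ≤ l.length := by
  rw [qIdx_eq_pIdx_rotate, ← length_rotate l 1]
  exact pIdx_le_length (by rwa [(rotate_perm l 1).sum_eq])

theorem sum_take_add_three_le_of_lt_qIdx {P : ℕ} (hc : ∀ x ∈ l, 2 ≤ x) (hP : 1 ≤ P)
    (hPq : P < qIdx l m) (hq : qIdx l m ≤ l.length) : (l.take P).sum + 3 ≤ m + l.headI := by
  have hlt : ((l.rotate 1).take (qIdx l m - 1)).sum < m :=
    sum_take_lt_of_lt_pIdx (by rw [← qIdx_eq_pIdx_rotate]; omega)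
  have hstep := sum_take_add_le_sum_take (l := l.rotate 1) (fun x hx => hc x (mem_rotate.1 hx))
    (show P - 1 < qIdx l m - 1 by omega) (by simp; omega)
  have hrot := sum_take_rotate_one_add (l := l) (k := P - 1) (by omega)
  rw [Nat.sub_add_cancel hP] at hrot
  omega

end FirstCrossing

section Sigma

variable {l : List ℕ} {c : ℝ} {K : ℕ}

theorem sigmaP_eq_sum_take (hK : K ≤ l.length) (hlt : ((l.take (K - 1)).sum : ℝ) < c)
    (hle : c ≤ (l.take K).sum) : sigmaP l c = (l.take K).sum := by
  refine IsLeast.csInf_eq ⟨⟨K, hK, rfl, hle⟩, ?_⟩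
  rintro _ ⟨k, -, rfl, hck⟩
  have hKk : K ≤ k := by
    by_contra! h
    have : ((l.take k).sum : ℝ) ≤ (l.take (K - 1)).sum := by
      exact_mod_cast l.monotone_sum_take (show k ≤ K - 1 by omega)
    linarith
  exact_mod_cast l.monotone_sum_take hKk

theorem sigmaM_eq_sum_take (hK : K ≤ l.length) (hle : ((l.take K).sum : ℝ) ≤ c)
    (hlt : c < (l.take (K + 1)).sum) : sigmaM l c = (l.take K).sum := by
  refine IsGreatest.csSup_eq ⟨⟨K, hK, rfl, hle⟩, ?_⟩
  rintro _ ⟨k, -, rfl, hkc⟩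
  have hkK : k ≤ K := by
    by_contra! h
    have : ((l.take (K + 1)).sum : ℝ) ≤ (l.take k).sum := by
      exact_mod_cast l.monotone_sum_take (show K + 1 ≤ k by omega)
    linarith
  exact_mod_cast l.monotone_sum_take hkK

end Sigma

section Phi

variable {a : ℕ} {l : List ℕ}

theorem kPhi_le_length : kPhi a l ≤ l.length :=
  csSup_le' fun _ hj => hj.1

theorem kPhi_eq {K : ℕ} (hK : K ≤ l.length) (hle : a ≤ (l.drop K).sum)
    (hlt : (l.drop (K + 1)).sum < a) : kPhi a l = K := by
  refine IsGreatest.csSup_eq ⟨⟨hK, hle⟩, fun j ⟨_, hj⟩ => ?_⟩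
  by_contra! h
  exact (hj.trans (sum_drop_le_sum_drop h)).not_gt hlt

theorem length_phi : (phi a l).length = l.length := by
  have := kPhi_le_length (a := a) (l := l)
  unfold phi
  split_ifs <;> simp; omega

theorem drop_phi {j : ℕ} (hj : kPhi a l ≤ j) : (phi a l).drop j = l.drop j := by
  have := kPhi_le_length (a := a) (l := l)
  unfold phi
  split_ifs with h
  · rfl
  · rw [drop_append, drop_eq_nil_of_le (by simp; omega), nil_append, drop_drop]
    congr 1
    simp
    omega

theorem sum_take_reverse_phi {j : ℕ} (hj : j + kPhi a l ≤ l.length) :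
    ((phi a l).reverse.take j).sum = (l.drop (l.length - j)).sum := by
  rw [take_reverse, sum_reverse, length_phi, drop_phi (by omega)]

end Phi

section ClockCoefficient

variable {a b P : ℕ} {H : List ℕ}

theorem thetaP_two_eq (hx : 2 ≤ H.headI) : thetaP H 2 = H.headI - 2 := by
  have hH : 1 ≤ H.length := by cases H <;> simp_all
  have h1 := sum_take_one H
  rw [thetaP, sigmaP_eq_sum_take (K := 1) hH (by norm_num) (by rw [h1]; exact_mod_cast hx), h1]

theorem thetaM_reverse_phi_eq {K : ℕ} (hK : K < H.length) (hlt : (H.drop (K + 1)).sum < a)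
    (hgt : a < (H.drop K).sum) : thetaM (phi a H).reverse a = a - (H.drop (K + 1)).sum := by
  have hk : kPhi a H = K := kPhi_eq hK.le hgt.le hlt
  have hsum (j : ℕ) (hj : j + K ≤ H.length) :
      ((phi a H).reverse.take j).sum = (H.drop (H.length - j)).sum :=
    sum_take_reverse_phi (hk ▸ hj)
  have hK1 : H.length - (H.length - (K + 1)) = K + 1 := by omega
  have hK0 : H.length - (H.length - (K + 1) + 1) = K := by omega
  rw [thetaM, sigmaM_eq_sum_take (K := H.length - (K + 1)) (by simp [length_phi])
    (by rw [hsum _ (by omega), hK1]; exact_mod_cast hlt.le)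
    (by rw [hsum _ (by omega), hK0]; exact_mod_cast hgt), hsum _ (by omega), hK1]

theorem DeltaI_eq (hP : 2 ≤ P) (hPH : P ≤ H.length) (hu : (H.take (P - 1)).sum ≤ b)
    (hv : b + 1 + H.headI ≤ (H.take P).sum) :
    DeltaI H (b + 1) =
      if (H.headI : ℤ) ≤ (H.take P).sum - (b + 1) then
        (b + 1 - (H.take (P - 1)).sum) * ((H.take P).sum - (b + 1) - H.headI : ℤ)
      else ((H.take P).sum - (b + 1)) * (b + 1 + H.headI - (H.take (P - 1)).sum : ℤ) := by
  have hy : (H.take (P - 1)).sum + H[P - 1] = (H.take P).sum := by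
    rw [← sum_take_succ, Nat.sub_add_cancel (by omega)]
  have hrot₁ := sum_take_rotate_one_add (l := H) (k := P - 1) (by omega)
  have hrot₂ := sum_take_rotate_one_add (l := H) (k := P - 1 - 1) (by omega)
  rw [Nat.sub_add_cancel (by omega)] at hrot₁ hrot₂
  have hp : pIdx H (b + 1) = P := pIdx_eq (by omega) (by omega)
  have hq : qIdx H (b + 1) = P - 1 := by
    rw [qIdx_eq_pIdx_rotate]
    exact pIdx_eq (by omega) (by omega)
  have hs : ((b + 1 - (H.take (P - 1)).sum : ℕ) : ℤ) = b + 1 - (H.take (P - 1)).sum := by omega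
  have hg : ((H[P - 1] - (b + 1 - (H.take (P - 1)).sum) : ℕ) : ℤ) =
      (H.take P).sum - (b + 1) := by omega
  have hg' : (H[P - 1] : ℤ) - (b + 1 - (H.take (P - 1)).sum) = (H.take P).sum - (b + 1) := by
    omega
  have ht : ((b + 1 - ((H.rotate 1).take (P - 1 - 1)).sum : ℕ) : ℤ) =
      b + 1 + H.headI - (H.take (P - 1)).sum := by omega
  rw [DeltaI, ipPart, sVal, tVal, tail_append_take_one, hp, hq, getD_eq_getElem _ _ (by omega),
    show P - 1 - P = 0 by omega, take_zero, nil_append]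
  simp only [e2, List.sum_cons, sum_nil, Nat.cast_zero, mul_zero, add_zero, hs, hg, hg', ht]

theorem DI_nonneg (hP : 2 ≤ P) (hPH : P ≤ H.length) (hsum : H.sum = a + b + 1)
    (hx : 2 ≤ H.headI) (hu : (H.take (P - 1)).sum + 2 ≤ b)
    (hv : b + 2 + H.headI ≤ (H.take P).sum) : 0 ≤ DI a b H := by
  have hP' : P - 1 + 1 = P := by omega
  have hdrop (k : ℕ) : (H.take k).sum + (H.drop k).sum = a + b + 1 :=
    hsum ▸ sum_take_add_sum_drop H k
  have h₁ := hdrop P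
  have h₂ := hdrop (P - 1)
  have hθ := thetaM_reverse_phi_eq (a := a) (H := H) (K := P - 1) (by omega) (by rw [hP']; omega)
    (by omega)
  rw [hP'] at hθ
  rw [DI, thetaP_two_eq hx, hθ, DeltaI_eq hP hPH (by omega) (by omega)]
  have hdropR : ((H.drop P).sum : ℝ) = a + b + 1 - (H.take P).sum := by
    rw [eq_sub_iff_add_eq, add_comm]; exact_mod_cast h₁
  rw [hdropR]
  generalize (H.take P).sum = S at *
  generalize (H.take (P - 1)).sum = u at *
  generalize H.headI = x at *
  push_cast
  have hu' : (u : ℝ) + 2 ≤ b := by exact_mod_cast hu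
  have hv' : (b : ℝ) + 2 + x ≤ S := by exact_mod_cast hv
  have hx' : (2 : ℝ) ≤ x := by exact_mod_cast hx
  -- `D = (s - 1)(S - (b + 1) - x) - 2` with `s = b + 1 - u ≥ 3` in the first case,
  -- `D = (S - (b + 1))(b + x - u) + x - 2` in the second.
  split_ifs
  · nlinarith [mul_nonneg (by linarith : (0 : ℝ) ≤ b - 2 - u)
      (by linarith : (0 : ℝ) ≤ S - b - 2 - x)]
  · nlinarith [mul_nonneg (by linarith : (0 : ℝ) ≤ S - (b + 1))
      (by linarith : (0 : ℝ) ≤ b + x - u)]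

theorem DI_reverse_take_append_nonneg {L : List ℕ} (hc : ∀ x ∈ L, 2 ≤ x)
    (hPL : P ≤ L.length) (hsum : L.sum = a + b + 1) (hlow : b + 2 ≤ (L.take (P - 1)).sum)
    (hhigh : (L.take P).sum + 2 ≤ b + L.headI) :
    0 ≤ DI a b ((L.take P).reverse ++ L.drop P) := by
  have hP : 2 ≤ P := by
    by_contra! h
    simp_all [show P - 1 = 0 by omega]
  have hstep := sum_take_add_le_sum_take hc (show P - 1 < P by omega) (by omega)
  have hH (k : ℕ) (hk : k ≤ P) := sum_take_reverse_take_append (l := L) hk hPL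
  have hH₁ := hH 1 (by omega)
  have hH₂ := hH (P - 1) (by omega)
  have hH₃ := hH P le_rfl
  rw [sum_take_one] at hH₁
  rw [show P - (P - 1) = 1 by omega, sum_take_one] at hH₂
  rw [Nat.sub_self, take_zero, sum_nil] at hH₃
  refine DI_nonneg hP (by simp; omega) ?_ (by omega) (by omega) (by omega)
  rw [sum_append, sum_reverse, sum_take_add_sum_drop, hsum]

end ClockCoefficient

theorem stmt16_general (a b n : ℕ) (hn : n = a + b + 1)
    (I : Composition n) (hW : ∀ i ∈ I.blocks, 2 ≤ i)
    (hqp : pIdx I.blocks (b + 1) + 1 ≤ qIdx I.blocks (b + 1))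
    (r : ℕ) (hr1 : 1 ≤ r) (hr2 : r ≤ qIdx I.blocks (b + 1) - pIdx I.blocks (b + 1))
    (hD : DI a b ((I.blocks.take (pIdx I.blocks (b + 1) + r)).reverse
        ++ I.blocks.drop (pIdx I.blocks (b + 1) + r)) < 0) :
    r = qIdx I.blocks (b + 1) - pIdx I.blocks (b + 1) ∨
      ((I.blocks.drop (pIdx I.blocks (b + 1))).sum = a ∧ r = 1) := by
  by_contra! ⟨hrq, hRa⟩
  set L := I.blocks
  set p := pIdx L (b + 1)
  have hsum : L.sum = a + b + 1 := hn ▸ I.blocks_sum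
  have hp : b + 1 ≤ (L.take p).sum := le_sum_take_pIdx (by omega)
  have hp0 : 0 < p := pIdx_pos (by omega) (by omega)
  have hqL : qIdx L (b + 1) ≤ L.length := qIdx_le_length (by omega)
  have hlow : b + 2 ≤ (L.take (p + r - 1)).sum := by
    rcases (show r = 1 ∨ 2 ≤ r by omega) with rfl | hr
    · have := L.sum_take_add_sum_drop p
      have : (L.drop p).sum ≠ a := fun h => hRa h rfl
      rw [Nat.add_sub_cancel]
      omega
    · have := sum_take_add_le_sum_take hW (show p < p + r - 1 by omega) (by omega)
      omega
  have hhigh := sum_take_add_three_le_of_lt_qIdx hW (P := p + r) (by omega) (by omega) hqL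
  exact hD.not_ge (DI_reverse_take_append_nonneg hW (by omega) hsum hlow (by omega))

/-- For `I ∈ W_>` with `q − p ≥ 1` and `1 ≤ r ≤ q − p`: if `D_{H_r} < 0`, then either
`r = q − p`, or `|R_I| = a` and `r = 1`. -/
theorem stmt16 (a b n : ℕ) (h2 : 2 ≤ b) (hba : b ≤ a) (hn : n = a + b + 1)
    (I : Composition n) (hW : ∀ i ∈ I.blocks, 2 ≤ i)
    (hgt : (ipPart I.blocks (b + 1) : ℤ) - sVal I.blocks (b + 1) < I.blocks.headI)
    (hqp : pIdx I.blocks (b + 1) + 1 ≤ qIdx I.blocks (b + 1))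
    (r : ℕ) (hr1 : 1 ≤ r) (hr2 : r ≤ qIdx I.blocks (b + 1) - pIdx I.blocks (b + 1))
    (hD : DI a b ((I.blocks.take (pIdx I.blocks (b + 1) + r)).reverse
        ++ I.blocks.drop (pIdx I.blocks (b + 1) + r)) < 0) :
    r = qIdx I.blocks (b + 1) - pIdx I.blocks (b + 1) ∨
      ((I.blocks.drop (pIdx I.blocks (b + 1))).sum = a ∧ r = 1) :=
  stmt16_general a b n hn I hW hqp r hr1 hr2 hD
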